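/- Let 𝔽 be an infinite field of characteristic p with 0 < p ≤ n/2 and p ≠ 2, and let d ≥ 1 be even. Then the invariant tr((X₁ − X₁ᵀ)(X₂ − X₂ᵀ) ⋯ (X_d − X_dᵀ)) is indecomposable in R^{O(n)}; that is, it does not lie in the 𝔽-span of products g·h with g, h ∈ R^{O(n)} homogeneous of positive degree. -/

import Mathlib

open Matrix
noncomputable section

/-- The polynomial ring `R = 𝔽[x_{ij}(k)]` in `n² d` variables. -/
abbrev Rpoly (𝔽 : Type) [Field 𝔽] (n d : ℕ) : Type :=
  MvPolynomial (Fin n × Fin n × Fin d) 𝔽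

/-- The generic matrix `X_k` with `(X_k)_{ij} = x_{ij}(k)`. -/
def Xgen (𝔽 : Type) [Field 𝔽] (n d : ℕ) (k : Fin d) :
    Matrix (Fin n) (Fin n) (Rpoly 𝔽 n d) :=
  fun i j => MvPolynomial.X (i, j, k)

/-- The symmetric generic matrix `X_k⁺`. -/
def XgenSym (𝔽 : Type) [Field 𝔽] (n d : ℕ) (k : Fin d) :
    Matrix (Fin n) (Fin n) (Rpoly 𝔽 n d) :=
  fun i j => if j ≤ i then MvPolynomial.X (i, j, k) else MvPolynomial.X (j, i, k)

/-- The skew-symmetric generic matrix `X_k⁻`. -/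
def XgenSkew (𝔽 : Type) [Field 𝔽] (n d : ℕ) (k : Fin d) :
    Matrix (Fin n) (Fin n) (Rpoly 𝔽 n d) :=
  fun i j =>
    if j < i then MvPolynomial.X (i, j, k)
    else if i < j then - MvPolynomial.X (j, i, k)
    else 0

/-- `σ_t(A)`, the `t`-th coefficient of the characteristic polynomial of `A`
(so `σ₁ = tr`, `σ_n = det`). -/
def sigmaCoeff {𝔽 : Type} [Field 𝔽] {n d : ℕ} (t : ℕ)
    (A : Matrix (Fin n) (Fin n) (Rpoly 𝔽 n d)) : Rpoly 𝔽 n d :=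
  (-1) ^ t * A.charpoly.coeff (n - t)

/-- The algebra `R^{O(n)}` of matrix `O(n)`-invariants: generated by all `σ_t(A)`,
`1 ≤ t ≤ n`, where `A` is a nonempty product of generic and transposed generic matrices. -/
def invO (𝔽 : Type) [Field 𝔽] (n d : ℕ) : Subalgebra 𝔽 (Rpoly 𝔽 n d) :=
  Algebra.adjoin 𝔽
    {f | ∃ t, 1 ≤ t ∧ t ≤ n ∧
      ∃ w : List (Matrix (Fin n) (Fin n) (Rpoly 𝔽 n d)), w ≠ [] ∧
        (∀ m ∈ w, (∃ k, m = Xgen 𝔽 n d k) ∨ (∃ k, m = (Xgen 𝔽 n d k)ᵀ)) ∧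
        f = sigmaCoeff t w.prod}

/-- The algebra `R₊^{O(n)}`, generated by all `σ_t(A)` for `A` a nonempty product of
symmetric generic matrices. -/
def invOplus (𝔽 : Type) [Field 𝔽] (n d : ℕ) : Subalgebra 𝔽 (Rpoly 𝔽 n d) :=
  Algebra.adjoin 𝔽
    {f | ∃ t, 1 ≤ t ∧ t ≤ n ∧
      ∃ w : List (Matrix (Fin n) (Fin n) (Rpoly 𝔽 n d)), w ≠ [] ∧
        (∀ m ∈ w, ∃ k, m = XgenSym 𝔽 n d k) ∧
        f = sigmaCoeff t w.prod}

/-- The algebra `R₋^{O(n)}`, generated by all `σ_t(A)` for `A` a nonempty product of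
skew-symmetric generic matrices. -/
def invOminus (𝔽 : Type) [Field 𝔽] (n d : ℕ) : Subalgebra 𝔽 (Rpoly 𝔽 n d) :=
  Algebra.adjoin 𝔽
    {f | ∃ t, 1 ≤ t ∧ t ≤ n ∧
      ∃ w : List (Matrix (Fin n) (Fin n) (Rpoly 𝔽 n d)), w ≠ [] ∧
        (∀ m ∈ w, ∃ k, m = XgenSkew 𝔽 n d k) ∧
        f = sigmaCoeff t w.prod}

/-- `f` is decomposable in the subalgebra `A`: it lies in the `𝔽`-span of products `g·h`
with `g, h ∈ A` homogeneous of positive degree. -/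
def Decomposable (𝔽 : Type) [Field 𝔽] {n d : ℕ} (A : Subalgebra 𝔽 (Rpoly 𝔽 n d))
    (f : Rpoly 𝔽 n d) : Prop :=
  f ∈ Submodule.span 𝔽
    {x : Rpoly 𝔽 n d | ∃ g ∈ A, ∃ h ∈ A,
      (∃ i, 0 < i ∧ MvPolynomial.IsHomogeneous g i) ∧
      (∃ j, 0 < j ∧ MvPolynomial.IsHomogeneous h j) ∧ x = g * h}

/-!
Specialize `X_k ↦ t_k • A_k`, with constant matrices `A_k` and fresh commuting variables `t_k`,
where every `A_k` with `k ≠ 0` lies in a set `𝒜` of matrices that is closed under products and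
transposes and on which the trace vanishes. Here `𝒜` consists of the matrices `diag(B, …, B, 0)`
with `p = char 𝔽` copies of a `2 × 2` block `B`, whose trace is `p · tr B = 0`.

A word in the `X_k, X_kᵀ` in which `X_0` does not occur goes to `t^τ • N` with `N ∈ 𝒜`, so `σ_t`
of it contributes to a squarefree monomial free of `t_0` only if `t = 1`, and then with
coefficient `tr N = 0`. Hence the image of every invariant has no squarefree monomial free of
`t_0`, and a product of two invariants of positive degree has zero coefficient at
`t_0 t_1 ⋯ t_{d-1}`: one of the factors would have to supply such a monomial. The image of
`tr ∏ (X_k - X_kᵀ)` has coefficient `tr ∏ (A_k - A_kᵀ) = (-4)^(d/2)` there, which is nonzero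
because `char 𝔽 ≠ 2`.
-/

theorem List.prod_map_smul {ι α M : Type*} [CommMonoid α] [Monoid M] [MulAction α M]
    [IsScalarTower α M M] [SMulCommClass α M M] (l : List ι) (c : ι → α) (f : ι → M) :
    (l.map fun i => c i • f i).prod = (l.map c).prod • (l.map f).prod := by
  induction l with
  | nil => simp
  | cons a l ih => simp [ih, smul_mul_smul_comm]

namespace Matrix

section Charpoly
open Polynomial
variable {R n : Type*} [CommRing R] [Fintype n] [DecidableEq n]

theorem charpoly_smul_comp (c : R) (M : Matrix n n R) :
    (c • M).charpoly.comp (C c * X) = C c ^ Fintype.card n * M.charpoly := by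
  have hmap : (charmatrix (c • M)).map (compRingHom (C c * X)) = C c • charmatrix M := by
    ext i j
    by_cases h : i = j
    · subst h; simp [charmatrix_apply_eq, mul_sub]
    · simp [charmatrix_apply_ne _ _ _ h]
  rw [charpoly, ← coe_compRingHom_apply, RingHom.map_det, RingHom.mapMatrix_apply, hmap,
    det_smul, charpoly]

theorem coeff_charpoly_smul [IsDomain R] {c : R} (hc : c ≠ 0) (M : Matrix n n R) {j : ℕ}
    (hj : j ≤ Fintype.card n) :
    (c • M).charpoly.coeff j = c ^ (Fintype.card n - j) * M.charpoly.coeff j := by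
  have h := congrArg (coeff · j) (charpoly_smul_comp c M)
  simp only [comp_C_mul_X_coeff, ← C_pow, coeff_C_mul] at h
  apply mul_right_cancel₀ (pow_ne_zero j hc)
  rw [h, mul_right_comm, ← pow_add, Nat.sub_add_cancel hj]

end Charpoly

section RepeatBlock
variable {R m o κ ν : Type*} [CommRing R] [DecidableEq o] (e : (m × o) ⊕ κ ≃ ν)

def repeatBlock : Matrix m m R →ₗ[R] Matrix ν ν R where
  toFun B := reindex e e (fromBlocks (blockDiagonal fun _ => B) 0 0 0)
  map_add' B C := by
    ext i j
    simp only [reindex_apply, submatrix_apply, add_apply]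
    generalize e.symm i = a; generalize e.symm j = b
    rcases a with ⟨a, k⟩ | a <;> rcases b with ⟨b, l⟩ | b <;>
      simp [blockDiagonal_apply, ite_add_zero]
  map_smul' c B := by
    ext i j
    simp only [reindex_apply, submatrix_apply, smul_apply]
    generalize e.symm i = a; generalize e.symm j = b
    rcases a with ⟨a, k⟩ | a <;> rcases b with ⟨b, l⟩ | b <;> simp [blockDiagonal_apply]

theorem repeatBlock_transpose (B : Matrix m m R) : repeatBlock e Bᵀ = (repeatBlock e B)ᵀ := by
  simp [repeatBlock, transpose_submatrix, fromBlocks_transpose, blockDiagonal_transpose]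

theorem repeatBlock_apply_inl (B : Matrix m m R) (i j : m) (k : o) :
    repeatBlock e B (e (.inl (i, k))) (e (.inl (j, k))) = B i j := by
  simp [repeatBlock]

theorem trace_single_sub_single_mul_repeatBlock [Fintype ν] [DecidableEq ν] (B : Matrix m m R)
    (i j : m) (k : o) :
    trace ((single (e (.inl (i, k))) (e (.inl (j, k))) 1 -
      single (e (.inl (j, k))) (e (.inl (i, k))) 1) * repeatBlock e B) = B j i - B i j := by
  rw [sub_mul, trace_sub, trace_single_mul, trace_single_mul, repeatBlock_apply_inl,
    repeatBlock_apply_inl, one_smul, one_smul]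

variable [Fintype m] [Fintype o] [Fintype κ]

theorem repeatBlock_mul [Fintype ν] [DecidableEq ν] (B C : Matrix m m R) :
    repeatBlock e (B * C) = repeatBlock e B * repeatBlock e C := by
  simp [repeatBlock, submatrix_mul_equiv, fromBlocks_multiply, blockDiagonal_mul]

theorem repeatBlock_pow_succ [Fintype ν] [DecidableEq ν] [DecidableEq m] (B : Matrix m m R)
    (j : ℕ) : repeatBlock e (B ^ (j + 1)) = repeatBlock e B ^ (j + 1) := by
  induction j with
  | zero => simp
  | succ j ih => rw [pow_succ, repeatBlock_mul, ih, ← pow_succ]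

theorem trace_repeatBlock [Fintype ν] (B : Matrix m m R) :
    trace (repeatBlock e B) = Fintype.card o • trace B := by
  have : trace (repeatBlock e B) =
      trace (fromBlocks (blockDiagonal fun _ : o => B) 0 0 (0 : Matrix κ κ R)) :=
    Fintype.sum_equiv e.symm _ _ fun _ => by simp [repeatBlock]
  rw [this, trace, Fintype.sum_sum_type]
  simpa [trace] using trace_blockDiagonal fun _ : o => B

end RepeatBlock

end Matrix

namespace MvPolynomial
variable {σ R : Type*} [CommSemiring R]

variable (R) in
def noSquarefreeAvoiding (z : σ) : Subalgebra R (MvPolynomial σ R) where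
  carrier := {q | ∀ μ : σ →₀ ℕ, μ ≠ 0 → μ z = 0 → (∀ k, μ k ≤ 1) → coeff μ q = 0}
  mul_mem' {q₁ q₂} h₁ h₂ μ hμ hμz hμ1 := by
    classical
    rw [coeff_mul]
    refine Finset.sum_eq_zero fun ab hab => ?_
    have hsum := Finset.HasAntidiagonal.mem_antidiagonal.mp hab
    have hk := fun k => DFunLike.congr_fun hsum k
    simp only [Finsupp.add_apply] at hk
    by_cases ha : ab.1 = 0
    · rw [show ab.2 = μ by simpa [ha] using hsum, h₂ μ hμ hμz hμ1, mul_zero]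
    · rw [h₁ ab.1 ha (by have := hk z; omega) (fun k => by have := hk k; have := hμ1 k; omega),
        zero_mul]
  add_mem' h₁ h₂ μ hμ hμz hμ1 := by rw [coeff_add, h₁ μ hμ hμz hμ1, h₂ μ hμ hμz hμ1, add_zero]
  algebraMap_mem' r μ hμ _ _ := by
    classical
    rw [algebraMap_eq, coeff_C, if_neg (Ne.symm hμ)]

theorem monomial_nsmul_mem_noSquarefreeAvoiding {z : σ} {t : ℕ} {τ : σ →₀ ℕ} (hτ : τ ≠ 0)
    {c : R} (hc : t = 1 → τ z = 0 → c = 0) : monomial (t • τ) c ∈ noSquarefreeAvoiding R z := by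
  classical
  intro μ hμ hμz hμ1
  rw [coeff_monomial]
  split_ifs with h
  · subst h
    obtain ⟨k, hk⟩ := Finsupp.ne_iff.mp hτ
    have hk1 : t * τ k ≤ 1 := by simpa using hμ1 k
    have ht0 : t ≠ 0 := by rintro rfl; simp at hμ
    obtain rfl : t = 1 := by nlinarith [Nat.pos_of_ne_zero hk, Nat.pos_of_ne_zero ht0]
    exact hc rfl (by simpa using hμz)
  · rfl

theorem coeff_mul_eq_zero_of_mem_noSquarefreeAvoiding {z : σ} {q₁ q₂ : MvPolynomial σ R}
    (h₁ : q₁ ∈ noSquarefreeAvoiding R z) (h₂ : q₂ ∈ noSquarefreeAvoiding R z)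
    (h₁0 : constantCoeff q₁ = 0) (h₂0 : constantCoeff q₂ = 0) {μ : σ →₀ ℕ}
    (hμ : ∀ k, μ k ≤ 1) : coeff μ (q₁ * q₂) = 0 := by
  classical
  rw [coeff_mul]
  refine Finset.sum_eq_zero fun ab hab => ?_
  have hk := fun k => DFunLike.congr_fun (Finset.HasAntidiagonal.mem_antidiagonal.mp hab) k
  simp only [Finsupp.add_apply] at hk
  by_cases ha : ab.1 = 0
  · rw [ha, ← constantCoeff_eq, h₁0, zero_mul]
  by_cases hb : ab.2 = 0
  · rw [hb, ← constantCoeff_eq, h₂0, mul_zero]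
  -- `μ z ≤ 1`, so one of the two factors omits `z`
  by_cases haz : ab.1 z = 0
  · rw [h₁ ab.1 ha haz (fun k => by have := hk k; have := hμ k; omega), zero_mul]
  · rw [h₂ ab.2 hb (by have := hk z; have := hμ z; omega)
      (fun k => by have := hk k; have := hμ k; omega), mul_zero]

theorem IsHomogeneous.constantCoeff_eq_zero {q : MvPolynomial σ R} {i : ℕ}
    (hq : q.IsHomogeneous i) (hi : 0 < i) : constantCoeff q = 0 := by
  rw [constantCoeff_eq]
  exact hq.coeff_eq_zero (by simp; omega)

end MvPolynomial

open MvPolynomial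

section ScaledEval
variable {𝔽 : Type} [Field 𝔽] {n d : ℕ}

def scaledEval (A : Fin d → Matrix (Fin n) (Fin n) 𝔽) :
    Rpoly 𝔽 n d →ₐ[𝔽] MvPolynomial (Fin d) 𝔽 :=
  aeval fun q => X q.2.2 * C (A q.2.2 q.1 q.2.1)

variable (A : Fin d → Matrix (Fin n) (Fin n) 𝔽)

theorem map_Xgen_scaledEval (k : Fin d) :
    (Xgen 𝔽 n d k).map (scaledEval A) = (X k : MvPolynomial (Fin d) 𝔽) • (A k).map C := by
  ext i j
  simp [Xgen, scaledEval]

theorem map_Xgen_transpose_scaledEval (k : Fin d) :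
    (Xgen 𝔽 n d k)ᵀ.map (scaledEval A) = (X k : MvPolynomial (Fin d) 𝔽) • (A k)ᵀ.map C := by
  rw [transpose_map, map_Xgen_scaledEval, transpose_smul, transpose_map]

theorem constantCoeff_scaledEval (g : Rpoly 𝔽 n d) :
    constantCoeff (scaledEval A g) = constantCoeff g := by
  induction g using MvPolynomial.induction_on with
  | C a => simp
  | add p q hp hq => simp [hp, hq]
  | mul_X p q _ => simp [scaledEval]

theorem scaledEval_sigmaCoeff {t : ℕ} (ht : t ≤ n) {M : Matrix (Fin n) (Fin n) (Rpoly 𝔽 n d)}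
    {τ : Fin d →₀ ℕ} {N : Matrix (Fin n) (Fin n) 𝔽}
    (hM : M.map (scaledEval A) = (monomial τ 1 : MvPolynomial (Fin d) 𝔽) • N.map C) :
    scaledEval A (sigmaCoeff t M) = monomial (t • τ) ((-1) ^ t * N.charpoly.coeff (n - t)) := by
  have hτ : (monomial τ 1 : MvPolynomial (Fin d) 𝔽) ≠ 0 := by simp
  have hcoeff := coeff_charpoly_smul hτ (N.map C) (j := n - t) (by simp)
  rw [Fintype.card_fin, Nat.sub_sub_self ht, charpoly_map, Polynomial.coeff_map] at hcoeff
  have hmap : scaledEval A (M.charpoly.coeff (n - t)) =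
      (M.map (scaledEval A)).charpoly.coeff (n - t) := by
    rw [← AlgHom.coe_toRingHom, charpoly_map, Polynomial.coeff_map]
  rw [sigmaCoeff, map_mul, map_pow, map_neg, map_one, hmap, hM, hcoeff, monomial_pow, one_pow,
    ← C_1, ← C_neg, ← C_pow, mul_left_comm, ← C_mul, mul_comm, C_mul_monomial, mul_one]

theorem scaledEval_trace_prod_sub_transpose :
    scaledEval A (trace (List.ofFn fun k => Xgen 𝔽 n d k - (Xgen 𝔽 n d k)ᵀ).prod) =
      monomial (∑ k, Finsupp.single k 1) (trace (List.ofFn fun k => A k - (A k)ᵀ).prod) := by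
  have hfactor (k : Fin d) : (Xgen 𝔽 n d k - (Xgen 𝔽 n d k)ᵀ).map (scaledEval A) =
      (X k : MvPolynomial (Fin d) 𝔽) • (A k - (A k)ᵀ).map C := by
    rw [← AlgHom.mapMatrix_apply, map_sub, AlgHom.mapMatrix_apply, AlgHom.mapMatrix_apply,
      map_Xgen_scaledEval, map_Xgen_transpose_scaledEval, ← smul_sub]
    congr 1
    ext i j
    simp
  have hX : ∏ k, (X k : MvPolynomial (Fin d) 𝔽) = monomial (∑ k, Finsupp.single k 1) 1 :=
    (monomial_sum_one _ _).symm
  have hC : (List.ofFn fun k => (A k - (A k)ᵀ).map (C : 𝔽 → MvPolynomial (Fin d) 𝔽)).prod =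
      (List.ofFn fun k => A k - (A k)ᵀ).prod.map C := by
    rw [← RingHom.mapMatrix_apply, map_list_prod, List.map_ofFn]; rfl
  rw [AddMonoidHom.map_trace (scaledEval A), ← AlgHom.mapMatrix_apply, map_list_prod,
    List.map_ofFn]
  simp only [Function.comp_def, AlgHom.mapMatrix_apply, hfactor]
  rw [List.ofFn_eq_map, List.prod_map_smul, ← List.ofFn_eq_map, ← List.ofFn_eq_map,
    List.prod_ofFn, hX, hC, trace_smul, ← AddMonoidHom.map_trace, smul_eq_mul, mul_comm,
    C_mul_monomial, mul_one]

end ScaledEval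

section Reduction
variable {𝔽 : Type} [Field 𝔽] {n d : ℕ} (A : Fin d → Matrix (Fin n) (Fin n) 𝔽)
  {𝒜 : Set (Matrix (Fin n) (Fin n) 𝔽)} {z : Fin d}
  (mul_mem : ∀ M ∈ 𝒜, ∀ N ∈ 𝒜, M * N ∈ 𝒜) (transpose_mem : ∀ M ∈ 𝒜, Mᵀ ∈ 𝒜)
  (hA : ∀ k ≠ z, A k ∈ 𝒜)
include mul_mem transpose_mem hA

theorem exists_map_scaledEval_prod_eq_monomial_smul
    {w : List (Matrix (Fin n) (Fin n) (Rpoly 𝔽 n d))} (hw : w ≠ [])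
    (hletters : ∀ M ∈ w, (∃ k, M = Xgen 𝔽 n d k) ∨ (∃ k, M = (Xgen 𝔽 n d k)ᵀ)) :
    ∃ τ : Fin d →₀ ℕ, τ ≠ 0 ∧ ∃ N : Matrix (Fin n) (Fin n) 𝔽,
      w.prod.map (scaledEval A) = (monomial τ 1 : MvPolynomial (Fin d) 𝔽) • N.map C ∧
      (τ z = 0 → N ∈ 𝒜) := by
  let P (M : Matrix (Fin n) (Fin n) (MvPolynomial (Fin d) 𝔽)) : Prop :=
    ∃ τ : Fin d →₀ ℕ, τ ≠ 0 ∧ ∃ N : Matrix (Fin n) (Fin n) 𝔽,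
      M = (monomial τ 1 : MvPolynomial (Fin d) 𝔽) • N.map C ∧ (τ z = 0 → N ∈ 𝒜)
  change P _
  rw [← AlgHom.mapMatrix_apply, map_list_prod]
  refine List.prod_induction_nonempty P ?_ (by simpa using hw) ?_
  · rintro _ _ ⟨τ₁, hτ₁, N₁, rfl, h₁⟩ ⟨τ₂, hτ₂, N₂, rfl, h₂⟩
    refine ⟨τ₁ + τ₂, by simp [hτ₁], N₁ * N₂, ?_, fun hz => mul_mem _ (h₁ ?_) _ (h₂ ?_)⟩
    · rw [smul_mul_smul_comm, monomial_mul, one_mul, Matrix.map_mul]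
    all_goals simp only [Finsupp.add_apply] at hz; omega
  · simp only [List.mem_map, AlgHom.mapMatrix_apply]
    rintro _ ⟨M, hM, rfl⟩
    have hz : ∀ k, (Finsupp.single k 1 : Fin d →₀ ℕ) z = 0 → k ≠ z := by
      rintro k hk rfl; simp at hk
    rcases hletters M hM with ⟨k, rfl⟩ | ⟨k, rfl⟩
    · exact ⟨_, by simp, _, map_Xgen_scaledEval A k, fun h => hA k (hz k h)⟩
    · exact ⟨_, by simp, _, map_Xgen_transpose_scaledEval A k,
        fun h => transpose_mem _ (hA k (hz k h))⟩

theorem scaledEval_mem_of_mem_invO (trace_eq_zero : ∀ M ∈ 𝒜, trace M = 0) {g : Rpoly 𝔽 n d}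
    (hg : g ∈ invO 𝔽 n d) : scaledEval A g ∈ noSquarefreeAvoiding 𝔽 z := by
  suffices invO 𝔽 n d ≤ (noSquarefreeAvoiding 𝔽 z).comap (scaledEval A) from this hg
  refine Algebra.adjoin_le ?_
  rintro _ ⟨t, -, htn, w, hw, hletters, rfl⟩
  obtain ⟨τ, hτ, N, hN, hNz⟩ :=
    exists_map_scaledEval_prod_eq_monomial_smul A mul_mem transpose_mem hA hw hletters
  rw [SetLike.mem_coe, Subalgebra.mem_comap, scaledEval_sigmaCoeff A htn hN]
  refine monomial_nsmul_mem_noSquarefreeAvoiding hτ fun ht hτz => ?_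
  subst ht
  have : Nonempty (Fin n) := ⟨⟨0, htn⟩⟩
  have htrace := trace_eq_neg_charpoly_coeff N
  rw [Fintype.card_fin, trace_eq_zero N (hNz hτz)] at htrace
  rw [pow_one, neg_one_mul, ← htrace]

theorem coeff_scaledEval_eq_zero_of_decomposable (trace_eq_zero : ∀ M ∈ 𝒜, trace M = 0)
    {f : Rpoly 𝔽 n d} (hf : Decomposable 𝔽 (invO 𝔽 n d) f) {μ : Fin d →₀ ℕ}
    (hμ : ∀ k, μ k ≤ 1) : coeff μ (scaledEval A f) = 0 := by
  induction hf using Submodule.span_induction with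
  | mem x hx =>
    obtain ⟨g, hg, h, hh, ⟨i, hi, hgi⟩, ⟨j, hj, hhj⟩, rfl⟩ := hx
    rw [map_mul]
    refine coeff_mul_eq_zero_of_mem_noSquarefreeAvoiding
      (scaledEval_mem_of_mem_invO A mul_mem transpose_mem hA trace_eq_zero hg)
      (scaledEval_mem_of_mem_invO A mul_mem transpose_mem hA trace_eq_zero hh) ?_ ?_ hμ
    · rw [constantCoeff_scaledEval, hgi.constantCoeff_eq_zero hi]
    · rw [constantCoeff_scaledEval, hhj.constantCoeff_eq_zero hj]
  | zero => simp
  | add x y _ _ hx hy => rw [map_add, coeff_add, hx, hy, add_zero]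
  | smul a x _ hx => rw [map_smul, coeff_smul, hx, smul_zero]

theorem not_decomposable_trace_prod_sub_transpose (trace_eq_zero : ∀ M ∈ 𝒜, trace M = 0)
    (htrace : trace (List.ofFn fun k => A k - (A k)ᵀ).prod ≠ 0) :
    ¬ Decomposable 𝔽 (invO 𝔽 n d)
      (trace (List.ofFn fun k => Xgen 𝔽 n d k - (Xgen 𝔽 n d k)ᵀ).prod) := by
  intro hf
  have hcoeff := coeff_scaledEval_eq_zero_of_decomposable A mul_mem transpose_mem hA
    trace_eq_zero hf (μ := ∑ k, Finsupp.single k 1) fun k => by simp [Finsupp.single_apply]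
  rw [scaledEval_trace_prod_sub_transpose, coeff_monomial, if_pos rfl] at hcoeff
  exact htrace hcoeff

end Reduction

section Witness
variable {𝔽 : Type} [Field 𝔽] {p m n : ℕ} [NeZero p] (e : (Fin 2 × Fin p) ⊕ Fin m ≃ Fin n)

def witnessMatrices (j : ℕ) : Fin (j + 1) → Matrix (Fin n) (Fin n) 𝔽 :=
  Fin.cons (single (e (.inl (0, 0))) (e (.inl (1, 0))) 1) fun _ => repeatBlock e !![0, 1; -1, 0]

theorem witnessMatrices_mem_range {j : ℕ} {k : Fin (j + 1)} (hk : k ≠ 0) :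
    witnessMatrices (𝔽 := 𝔽) e j k ∈ Set.range (repeatBlock e) := by
  obtain ⟨k, rfl⟩ := Fin.exists_succ_eq.mpr hk
  exact ⟨_, rfl⟩

theorem trace_prod_witnessMatrices_sub_transpose (j : ℕ) :
    trace (List.ofFn fun k =>
        witnessMatrices (𝔽 := 𝔽) e (2 * j + 1) k - (witnessMatrices e (2 * j + 1) k)ᵀ).prod =
      (-4) ^ (j + 1) := by
  have hskew : (!![0, 1; -1, 0] - !![0, 1; -1, 0]ᵀ : Matrix (Fin 2) (Fin 2) 𝔽) =
      !![0, 2; -2, 0] := by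
    ext i j; fin_cases i <;> fin_cases j <;> norm_num
  have hsq : (!![0, 2; -2, 0] : Matrix (Fin 2) (Fin 2) 𝔽) ^ 2 = (-4 : 𝔽) • 1 := by
    rw [sq, mul_fin_two, one_fin_two, smul_of]; norm_num
  rw [List.ofFn_succ, List.prod_cons]
  simp only [witnessMatrices, Fin.cons_zero, Fin.cons_succ]
  rw [List.ofFn_const, List.prod_replicate, transpose_single, ← repeatBlock_transpose, ← map_sub,
    hskew, ← repeatBlock_pow_succ, pow_succ, pow_mul, hsq, smul_pow, one_pow, smul_mul, one_mul,
    map_smul, mul_smul_comm, trace_smul, trace_single_sub_single_mul_repeatBlock, smul_eq_mul,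
    pow_succ]
  norm_num

end Witness

theorem trace_prod_diff_transpose_indecomposable_general
    (𝔽 : Type) [Field 𝔽] (n d : ℕ) (hd : 1 ≤ d) (hdeven : Even d)
    (hp0 : 0 < ringChar 𝔽) (hpn : 2 * ringChar 𝔽 ≤ n) (hp2 : ringChar 𝔽 ≠ 2) :
    ¬ Decomposable 𝔽 (invO 𝔽 n d)
      (Matrix.trace (List.ofFn (fun k : Fin d =>
        Xgen 𝔽 n d k - (Xgen 𝔽 n d k)ᵀ)).prod) := by
  have : NeZero (ringChar 𝔽) := ⟨hp0.ne'⟩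
  obtain ⟨j, rfl⟩ : ∃ j, d = 2 * j + 1 + 1 := by
    obtain ⟨r, hr⟩ := hdeven
    exact ⟨r - 1, by omega⟩
  let e : (Fin 2 × Fin (ringChar 𝔽)) ⊕ Fin (n - 2 * ringChar 𝔽) ≃ Fin n :=
    Fintype.equivOfCardEq (by simp; omega)
  refine not_decomposable_trace_prod_sub_transpose (witnessMatrices e (2 * j + 1))
    (𝒜 := Set.range (repeatBlock e)) (z := 0) ?_ ?_ (fun _ => witnessMatrices_mem_range e) ?_ ?_
  · rintro _ ⟨B, rfl⟩ _ ⟨C, rfl⟩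
    exact ⟨B * C, repeatBlock_mul e B C⟩
  · rintro _ ⟨B, rfl⟩
    exact ⟨Bᵀ, repeatBlock_transpose e B⟩
  · rintro _ ⟨B, rfl⟩
    rw [trace_repeatBlock, Fintype.card_fin, nsmul_eq_mul, ringChar.Nat.cast_ringChar, zero_mul]
  · rw [trace_prod_witnessMatrices_sub_transpose]
    have h2 := Ring.two_ne_zero hp2
    exact pow_ne_zero _ (by rw [show (-4 : 𝔽) = -(2 * 2) by norm_num]; simp [h2])

theorem trace_prod_diff_transpose_indecomposable
    (𝔽 : Type) [Field 𝔽] [Infinite 𝔽] (n d : ℕ) (hn : 2 ≤ n) (hd : 1 ≤ d) (hdeven : Even d)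
    (hp0 : 0 < ringChar 𝔽) (hpn : 2 * ringChar 𝔽 ≤ n) (hp2 : ringChar 𝔽 ≠ 2) :
    ¬ Decomposable 𝔽 (invO 𝔽 n d)
      (Matrix.trace (List.ofFn (fun k : Fin d =>
        Xgen 𝔽 n d k - (Xgen 𝔽 n d k)ᵀ)).prod) :=
  trace_prod_diff_transpose_indecomposable_general 𝔽 n d hd hdeven hp0 hpn hp2
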